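/- Infinite divisibility of the Bell distribution: for every θ > 0 and every integer m ≥ 1, there is a probability mass function r_m on ℕ such that p_θ = r_m^{*m} (the m-fold convolution of r_m with itself); explicitly one may take r_m(z) := ∑_{n=0}^∞ (e^{-μ/m} (μ/m)^n / n!) · q^{*n}(z) with μ := e^θ − 1 and q the zero-truncated Poisson(θ) mass function q(y) := θ^y/(y!(e^θ−1)) for y ≥ 1, q(0) := 0. -/

import Mathlib

/-!
With `μ = e^θ - 1` and `q` the zero-truncated Poisson(θ) law, Bell(θ) is the compound Poisson
law `e^{-μ} ∑ₙ μⁿ/n! q^{*n}`. In generating functions `q^{*n}` corresponds to `μ⁻ⁿ (e^{θx} - 1)ⁿ`;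
expanding binomially, `∑ₙ [x^z] (e^{θx} - 1)ⁿ / n!` becomes the Cauchy product of
`∑ (-1)^i/i! = e⁻¹` with `∑ₖ (kθ)^z/(z! k!)`, which is `θ^z B_z / z!` by Dobinski's formula.
The compound Poisson law with rate `c` and jumps `f` has generating function `e^{-c} exp (c F)`
(`F` substituted into the formal exponential), whose `m`-th power is the one with rate `m c`;
hence rate `μ / m` gives an `m`-th convolution root.
-/

open Real

/-- The `z`-th Bell number given by Dobinski's formula (with `0^0 = 1`). -/
noncomputable def bellDobinski (z : ℕ) : ℝ :=
  (Real.exp 1)⁻¹ * ∑' k : ℕ, (k : ℝ) ^ z / (Nat.factorial k : ℝ)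

/-- The probability mass function of the Bell distribution with parameter `θ`:
`p_θ(z) = θ^z e^{1 - e^θ} B_z / z!`. -/
noncomputable def bellPMF (θ : ℝ) (z : ℕ) : ℝ :=
  θ ^ z * Real.exp (1 - Real.exp θ) * bellDobinski z / (Nat.factorial z : ℝ)

/-- Convolution of two mass functions on `ℕ`: `(f * g)(z) = ∑_{y=0}^{z} f(y) g(z - y)`. -/
def conv (f g : ℕ → ℝ) : ℕ → ℝ :=
  fun z => ∑ y ∈ Finset.range (z + 1), f y * g (z - y)

/-- `m`-fold convolution of a mass function on `ℕ`, with `f^{*0}` the point mass at `0`. -/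
def convPow (f : ℕ → ℝ) : ℕ → ℕ → ℝ
  | 0 => fun z => if z = 0 then 1 else 0
  | n + 1 => conv f (convPow f n)

/-- The zero-truncated Poisson(θ) mass function: `q(y) = θ^y / (y! (e^θ - 1))` for `y ≥ 1`
and `q(0) = 0`. -/
noncomputable def ztPoisson (θ : ℝ) : ℕ → ℝ :=
  fun y => if y = 0 then 0 else θ ^ y / ((Nat.factorial y : ℝ) * (Real.exp θ - 1))

open Finset PowerSeries

theorem mk_conv (f g : ℕ → ℝ) : mk (conv f g) = mk f * mk g := by
  ext z
  rw [coeff_mk, coeff_mul, Nat.sum_antidiagonal_eq_sum_range_succ_mk]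
  simp [conv]

theorem mk_convPow (f : ℕ → ℝ) (n : ℕ) : mk (convPow f n) = mk f ^ n := by
  induction n with
  | zero => ext z; simp [convPow, coeff_one]
  | succ n ih => rw [convPow, mk_conv, ih, pow_succ']

theorem convPow_eq_coeff (f : ℕ → ℝ) (n z : ℕ) : convPow f n z = coeff z (mk f ^ n) := by
  rw [← mk_convPow, coeff_mk]

theorem coeff_pow_eq_zero_of_lt {R : Type*} [CommSemiring R] {F : R⟦X⟧} (hF : constantCoeff F = 0)
    {n z : ℕ} (h : z < n) : coeff z (F ^ n) = 0 := by
  obtain ⟨G, hG⟩ := pow_dvd_pow_of_dvd (X_dvd_iff.mpr hF) n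
  rw [hG, coeff_X_pow_mul', if_neg h.not_ge]

theorem convPow_eq_zero_of_lt {f : ℕ → ℝ} (hf : f 0 = 0) {n z : ℕ} (h : z < n) :
    convPow f n z = 0 := by
  rw [convPow_eq_coeff, coeff_pow_eq_zero_of_lt (by simpa using hf) h]

theorem convPow_nonneg {f : ℕ → ℝ} (hf : ∀ y, 0 ≤ f y) (n z : ℕ) : 0 ≤ convPow f n z := by
  induction n generalizing z with
  | zero => simp only [convPow]; positivity
  | succ n ih =>
    simp only [convPow, conv]
    exact sum_nonneg fun y _ => mul_nonneg (hf y) (ih (z - y))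

theorem hasSum_convPow {f : ℕ → ℝ} {s : ℝ} (hf : HasSum f s) (n : ℕ) :
    HasSum (convPow f n) (s ^ n) := by
  induction n with
  | zero => exact (pow_zero s).symm ▸ hasSum_ite_eq 0 (1 : ℝ)
  | succ n ih =>
    have h := hasSum_sum_range_mul_of_summable_norm (summable_norm_iff (E := ℝ) |>.mpr hf.summable)
      (summable_norm_iff (E := ℝ) |>.mpr ih.summable)
    rwa [hf.tsum_eq, ih.tsum_eq, ← pow_succ'] at h

theorem Real.hasSum_pow_div_factorial (x : ℝ) :
    HasSum (fun n : ℕ => x ^ n / (Nat.factorial n : ℝ)) (Real.exp x) := by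
  rw [Real.exp_eq_exp_ℝ]
  exact NormedSpace.expSeries_div_hasSum_exp x

noncomputable def compoundPoisson (c : ℝ) (f : ℕ → ℝ) (z : ℕ) : ℝ :=
  ∑' n : ℕ, Real.exp (-c) * c ^ n / (Nat.factorial n : ℝ) * convPow f n z

section CompoundPoisson

variable {f : ℕ → ℝ}

theorem compoundPoisson_nonneg {c : ℝ} (hc : 0 ≤ c) (hf : ∀ y, 0 ≤ f y) (z : ℕ) :
    0 ≤ compoundPoisson c f z :=
  tsum_nonneg fun n => by have := convPow_nonneg hf n z; positivity

theorem hasSum_compoundPoisson {c : ℝ} (hc : 0 ≤ c) (hf : ∀ y, 0 ≤ f y) (hf1 : HasSum f 1) :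
    HasSum (compoundPoisson c f) 1 := by
  set w : ℕ → ℝ := fun n => Real.exp (-c) * c ^ n / (Nat.factorial n : ℝ)
  set G : ℕ × ℕ → ℝ := fun p => w p.1 * convPow f p.1 p.2
  have hG : 0 ≤ G := fun p => by have := convPow_nonneg hf p.1 p.2; positivity
  have hrow (n : ℕ) : HasSum (fun z => G (n, z)) (w n) := by
    simpa using (hasSum_convPow hf1 n).mul_left (w n)
  have hw : HasSum w 1 := by
    simpa [w, mul_div_assoc, ← Real.exp_add] using
      (Real.hasSum_pow_div_factorial c).mul_left (Real.exp (-c))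
  have hGs : Summable G := (summable_prod_of_nonneg hG).2
    ⟨fun n => (hrow n).summable, hw.summable.congr fun n => ((hrow n).tsum_eq).symm⟩
  have hG1 : HasSum G 1 := by
    convert hGs.hasSum
    exact (hGs.hasSum.prod_fiberwise hrow).unique hw |>.symm
  exact ((Equiv.prodComm ℕ ℕ).hasSum_iff.2 hG1).prod_fiberwise
    fun z => (hGs.prod_symm.prod_factor z).hasSum

theorem compoundPoisson_eq_sum (hf : f 0 = 0) (c : ℝ) (z : ℕ) :
    compoundPoisson c f z =
      ∑ n ∈ range (z + 1), Real.exp (-c) * c ^ n / (Nat.factorial n : ℝ) * convPow f n z :=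
  tsum_eq_sum fun n hn => by rw [convPow_eq_zero_of_lt hf (by simpa using hn), mul_zero]

theorem mk_compoundPoisson (hf : f 0 = 0) (c : ℝ) :
    mk (compoundPoisson c f) = C (Real.exp (-c)) * subst (mk f) (rescale c (exp ℝ)) := by
  have hF : constantCoeff (mk f) = 0 := by simpa using hf
  ext z
  rw [coeff_mk, compoundPoisson_eq_sum hf, coeff_C_mul,
    coeff_subst' (HasSubst.of_constantCoeff_zero' hF),
    finsum_eq_sum_of_support_subset (s := range (z + 1)), mul_sum]
  · refine sum_congr rfl fun n _ => ?_
    simp only [convPow_eq_coeff, coeff_rescale, coeff_exp, one_div, map_inv₀, map_natCast,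
      smul_eq_mul]
    ring
  · intro n hn
    contrapose! hn
    simp [coeff_pow_eq_zero_of_lt hF (by simpa using hn)]

theorem convPow_compoundPoisson (hf : f 0 = 0) (c : ℝ) (m : ℕ) :
    convPow (compoundPoisson c f) m = compoundPoisson (m * c) f := by
  have hF : HasSubst (mk f) := HasSubst.of_constantCoeff_zero' (by simpa using hf)
  have hexp : rescale c (exp ℝ) ^ m = rescale (m * c) (exp ℝ) := by
    rw [← map_pow, exp_pow_eq_rescale_exp, rescale_rescale]
  have hmk : mk (convPow (compoundPoisson c f) m) = mk (compoundPoisson (m * c) f) := by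
    rw [mk_convPow, mk_compoundPoisson hf, mk_compoundPoisson hf, mul_pow, ← map_pow,
      ← subst_pow hF, hexp, ← Real.exp_nat_mul, mul_neg]
  funext z
  simpa using congrArg (coeff z) hmk

end CompoundPoisson

theorem mk_ztPoisson (θ : ℝ) :
    mk (ztPoisson θ) = C (Real.exp θ - 1)⁻¹ * (rescale θ (exp ℝ) - 1) := by
  ext y
  rw [coeff_mk, coeff_C_mul, map_sub, coeff_rescale, coeff_exp, coeff_one, ztPoisson]
  rcases y.eq_zero_or_pos with rfl | hy
  · simp
  · simp only [hy.ne', ↓reduceIte, ← div_div, one_div, map_inv₀, map_natCast, sub_zero]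
    ring

theorem ztPoisson_nonneg {θ : ℝ} (hθ : 0 ≤ θ) (y : ℕ) : 0 ≤ ztPoisson θ y := by
  have hμ : 0 ≤ Real.exp θ - 1 := sub_nonneg.2 (Real.one_le_exp hθ)
  unfold ztPoisson
  split_ifs
  · rfl
  · positivity

theorem Real.exp_sub_one_ne_zero {θ : ℝ} (hθ : θ ≠ 0) : Real.exp θ - 1 ≠ 0 :=
  sub_ne_zero.2 ((Real.exp_eq_one_iff θ).not.2 hθ)

theorem hasSum_ztPoisson {θ : ℝ} (hθ : θ ≠ 0) : HasSum (ztPoisson θ) 1 := by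
  have h := ((Real.hasSum_pow_div_factorial θ).sub (hasSum_ite_eq 0 1)).div_const
    (Real.exp θ - 1)
  rw [div_self (Real.exp_sub_one_ne_zero hθ)] at h
  refine h.congr_fun fun y => ?_
  rcases y.eq_zero_or_pos with rfl | hy
  · simp [ztPoisson]
  · simp [ztPoisson, hy.ne', div_div]

theorem summable_natCast_pow_div_factorial (z : ℕ) :
    Summable fun k : ℕ => (k : ℝ) ^ z / (Nat.factorial k : ℝ) := by
  refine Summable.of_nonneg_of_le (fun k => by positivity) (fun k => ?_)
    (Real.summable_pow_div_factorial ((2 : ℝ) ^ z))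
  gcongr
  calc (k : ℝ) ^ z ≤ ((2 : ℝ) ^ k) ^ z := by gcongr; exact_mod_cast Nat.lt_two_pow_self.le
    _ = ((2 : ℝ) ^ z) ^ k := by rw [← pow_mul, ← pow_mul, mul_comm]

theorem coeff_rescale_exp_sub_one_pow_div_factorial (θ : ℝ) (n z : ℕ) :
    coeff z ((rescale θ (exp ℝ) - 1) ^ n) / (Nat.factorial n : ℝ) =
      ∑ p ∈ antidiagonal n, (-1) ^ p.1 / (Nat.factorial p.1 : ℝ) *
        (θ ^ z / (Nat.factorial z : ℝ) * ((p.2 : ℝ) ^ z / (Nat.factorial p.2 : ℝ))) := by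
  have hterm (i j : ℕ) : (-1 : ℝ⟦X⟧) ^ i * rescale θ (exp ℝ) ^ j =
      C ((-1) ^ i) * rescale (j * θ) (exp ℝ) := by
    rw [← map_pow, exp_pow_eq_rescale_exp, rescale_rescale, map_pow, map_neg, map_one]
  rw [sub_eq_neg_add, (Commute.all _ _).add_pow', map_sum, sum_div]
  refine sum_congr rfl fun p hp => ?_
  obtain ⟨i, j⟩ := p
  rw [HasAntidiagonal.mem_antidiagonal] at hp
  subst hp
  have hfact : ((i + j).choose i * i.factorial * j.factorial : ℝ) = (i + j).factorial := by
    have h := Nat.choose_mul_factorial_mul_factorial (Nat.le_add_right i j)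
    rw [Nat.add_sub_cancel_left] at h
    exact_mod_cast h
  have hchoose : ((i + j).choose i : ℝ) ≠ 0 :=
    Nat.cast_ne_zero.2 (Nat.choose_pos (Nat.le_add_right i j)).ne'
  rw [map_nsmul, hterm, coeff_C_mul, coeff_rescale, coeff_exp, nsmul_eq_mul, ← hfact]
  simp only [one_div, map_inv₀, map_natCast]
  field_simp
  ring

theorem tsum_coeff_rescale_exp_sub_one_pow_div_factorial (θ : ℝ) (z : ℕ) :
    ∑' n : ℕ, coeff z ((rescale θ (exp ℝ) - 1) ^ n) / (Nat.factorial n : ℝ) =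
      θ ^ z * bellDobinski z / (Nat.factorial z : ℝ) := by
  set u : ℕ → ℝ := fun i => (-1) ^ i / (Nat.factorial i : ℝ)
  set v : ℕ → ℝ := fun j => θ ^ z / (Nat.factorial z : ℝ) * ((j : ℝ) ^ z / (Nat.factorial j : ℝ))
  have hu : HasSum u (Real.exp (-1)) := Real.hasSum_pow_div_factorial (-1)
  have hv : HasSum v (θ ^ z / (Nat.factorial z : ℝ) *
      ∑' k : ℕ, (k : ℝ) ^ z / (Nat.factorial k : ℝ)) :=
    (summable_natCast_pow_div_factorial z).hasSum.mul_left _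
  calc ∑' n : ℕ, coeff z ((rescale θ (exp ℝ) - 1) ^ n) / (Nat.factorial n : ℝ)
      = ∑' n : ℕ, ∑ p ∈ antidiagonal n, u p.1 * v p.2 :=
        tsum_congr fun n => coeff_rescale_exp_sub_one_pow_div_factorial θ n z
    _ = (∑' i, u i) * ∑' j, v j :=
        (tsum_mul_tsum_eq_tsum_sum_antidiagonal_of_summable_norm
          (summable_norm_iff (E := ℝ) |>.2 hu.summable)
          (summable_norm_iff (E := ℝ) |>.2 hv.summable)).symm
    _ = θ ^ z * bellDobinski z / (Nat.factorial z : ℝ) := by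
        rw [hu.tsum_eq, hv.tsum_eq, bellDobinski, Real.exp_neg]
        ring

theorem bellPMF_eq_compoundPoisson {θ : ℝ} (hθ : θ ≠ 0) :
    bellPMF θ = compoundPoisson (Real.exp θ - 1) (ztPoisson θ) := by
  have hμ := Real.exp_sub_one_ne_zero hθ
  funext z
  have hterm (n : ℕ) : Real.exp (-(Real.exp θ - 1)) * (Real.exp θ - 1) ^ n /
      (Nat.factorial n : ℝ) * convPow (ztPoisson θ) n z =
      Real.exp (1 - Real.exp θ) *
        (coeff z ((rescale θ (exp ℝ) - 1) ^ n) / (Nat.factorial n : ℝ)) := by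
    rw [convPow_eq_coeff, mk_ztPoisson, mul_pow, ← map_pow, coeff_C_mul, inv_pow, neg_sub]
    field_simp
  rw [compoundPoisson, tsum_congr hterm, tsum_mul_left,
    tsum_coeff_rescale_exp_sub_one_pow_div_factorial, bellPMF]
  ring

/-- Infinite divisibility of the Bell distribution: for every `θ > 0` and every integer
`m ≥ 1`, there is a probability mass function `r` on `ℕ` with `p_θ = r^{*m}`; explicitly one
may take `r(z) = ∑_{n=0}^∞ (e^{-μ/m} (μ/m)^n / n!) ⬝ q^{*n}(z)` where `μ = e^θ - 1` and `q`
is the zero-truncated Poisson(θ) mass function. -/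
theorem bell_infinitely_divisible (θ : ℝ) (hθ : 0 < θ) (m : ℕ) (hm : 1 ≤ m) :
    ∃ r : ℕ → ℝ,
      (r = fun z : ℕ =>
        ∑' n : ℕ,
          Real.exp (-((Real.exp θ - 1) / m)) * ((Real.exp θ - 1) / m) ^ n /
              (Nat.factorial n : ℝ) * convPow (ztPoisson θ) n z) ∧
      (∀ z : ℕ, 0 ≤ r z) ∧
      HasSum r 1 ∧
      ∀ z : ℕ, convPow r m z = bellPMF θ z := by
  have hq : ∀ y, 0 ≤ ztPoisson θ y := ztPoisson_nonneg hθ.le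
  have hc : 0 ≤ (Real.exp θ - 1) / m :=
    div_nonneg (sub_nonneg.2 (Real.one_le_exp hθ.le)) m.cast_nonneg
  refine ⟨compoundPoisson ((Real.exp θ - 1) / m) (ztPoisson θ), rfl,
    compoundPoisson_nonneg hc hq, hasSum_compoundPoisson hc hq (hasSum_ztPoisson hθ.ne'),
    fun z => ?_⟩
  rw [convPow_compoundPoisson (if_pos rfl), mul_div_cancel₀ _ (Nat.cast_ne_zero.2 (by omega)),
    bellPMF_eq_compoundPoisson hθ.ne']
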